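/- arXiv:1804.01725 — 3 statements merged into one kernel-verified Lean document; each statement's English description precedes it below -/
import Mathlib

section
/- Let M be a finitely generated ℤ₂-module and τ a ℤ₂-linear involution of M (τ ∘ τ = id). Define the real component M⁺ = ker(1−τ) and the imaginary component M⁻ = ker(1+τ). Then the ℤ₂-linear addition map M⁺ × M⁻ → M, (a,b) ↦ a + b, has finite kernel and finite cokernel; i.e., M is pseudo-isomorphic to M⁺ ⊕ M⁻. -/
open PadicInt in
/-- A finitely generated `ℤ₂`-module annihilated by `2` is finite. -/
lemma finite_of_two_smul_eq_zero (K : Type*) [AddCommGroup K] [Module ℤ_[2] K]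
    [Module.Finite ℤ_[2] K] (h : ∀ x : K, (2 : ℤ_[2]) • x = 0) : Finite K := by
  obtain ⟨n, s, hs⟩ := Module.Finite.exists_fin (R := ℤ_[2]) (M := K)
  refine Finite.of_surjective
    (fun v : Fin n → Fin 2 => ∑ i, ((v i : ℕ) : ℤ_[2]) • s i) ?_
  intro x
  have hx : x ∈ Submodule.span ℤ_[2] (Set.range s) := hs ▸ Submodule.mem_top
  obtain ⟨c, hc⟩ := (Submodule.mem_span_range_iff_exists_fun ℤ_[2]).mp hx
  refine ⟨fun i => ⟨zmodRepr (c i), zmodRepr_lt_p _⟩, ?_⟩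
  have key : ∀ i : Fin n, ∃ e : ℤ_[2], c i = ((zmodRepr (c i) : ℕ) : ℤ_[2]) + 2 * e := by
    intro i
    have := sub_zmodRepr_mem (c i)
    rw [maximalIdeal_eq_span_p, Ideal.mem_span_singleton] at this
    obtain ⟨e, he⟩ := this
    exact ⟨e, by push_cast at he ⊢; linear_combination he⟩
  choose e he using key
  have hx2 : x = (∑ i, ((zmodRepr (c i) : ℕ) : ℤ_[2]) • s i) + (2 : ℤ_[2]) • ∑ i, e i • s i := by
    rw [← hc, Finset.smul_sum, ← Finset.sum_add_distrib]
    refine Finset.sum_congr rfl fun i _ => ?_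
    rw [smul_smul, ← add_smul, ← he i]
  rw [hx2, h]
  simp

/-- Let `M` be a finitely generated `ℤ₂`-module and `τ` a `ℤ₂`-linear
involution of `M`.  With `M⁺ = ker(1−τ)` and `M⁻ = ker(1+τ)`, the addition map
`M⁺ × M⁻ → M`, `(a, b) ↦ a + b`, has finite kernel and finite cokernel. -/
theorem involution_plus_minus_pseudo_decomposition
    (M : Type*) [AddCommGroup M] [Module ℤ_[2] M] [Module.Finite ℤ_[2] M]
    (τ : M →ₗ[ℤ_[2]] M) (hτ : τ ∘ₗ τ = LinearMap.id) :
    Finite (LinearMap.ker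
        (LinearMap.coprod (LinearMap.ker (LinearMap.id - τ)).subtype
          (LinearMap.ker (LinearMap.id + τ)).subtype)) ∧
    Finite (M ⧸ LinearMap.range
        (LinearMap.coprod (LinearMap.ker (LinearMap.id - τ)).subtype
          (LinearMap.ker (LinearMap.id + τ)).subtype)) := by
  have hτ' : ∀ m : M, τ (τ m) = m := fun m => LinearMap.congr_fun hτ m
  set P := LinearMap.ker (LinearMap.id - τ) with hP
  set N := LinearMap.ker (LinearMap.id + τ) with hN
  set f := LinearMap.coprod P.subtype N.subtype with hf
  haveI : IsNoetherian ℤ_[2] M := inferInstance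
  constructor
  · refine finite_of_two_smul_eq_zero _ ?_
    rintro ⟨⟨⟨a, ha⟩, ⟨b, hb⟩⟩, hab⟩
    have hab' : a + b = 0 := hab
    rw [hP, LinearMap.mem_ker] at ha
    rw [hN, LinearMap.mem_ker] at hb
    simp only [LinearMap.sub_apply, LinearMap.id_apply, sub_eq_zero] at ha
    simp only [LinearMap.add_apply, LinearMap.id_apply] at hb
    -- b = -a, so τ a = a and τ b = -b give 2a = 0, 2b = 0
    have hba : b = -a := eq_neg_of_add_eq_zero_right hab'
    have h2a : a + a = 0 := by
      have h1 : -a + τ (-a) = 0 := hba ▸ hb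
      rw [map_neg, ← ha, ← neg_add, neg_eq_zero] at h1
      exact h1
    have h2b : b + b = 0 := by
      rw [hba, ← neg_add, neg_eq_zero]
      exact h2a
    ext
    · show (2 : ℤ_[2]) • a = 0
      rw [two_smul]; exact h2a
    · show (2 : ℤ_[2]) • b = 0
      rw [two_smul]; exact h2b
  · refine finite_of_two_smul_eq_zero _ ?_
    intro x
    obtain ⟨m, rfl⟩ := Submodule.Quotient.mk_surjective _ x
    rw [← Submodule.Quotient.mk_smul, Submodule.Quotient.mk_eq_zero]
    have hmem1 : m + τ m ∈ P := by
      rw [hP, LinearMap.mem_ker]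
      simp only [LinearMap.sub_apply, LinearMap.id_apply, map_add, hτ']
      abel
    have hmem2 : m - τ m ∈ N := by
      rw [hN, LinearMap.mem_ker]
      simp only [LinearMap.add_apply, LinearMap.id_apply, map_sub, hτ']
      abel
    refine ⟨(⟨m + τ m, hmem1⟩, ⟨m - τ m, hmem2⟩), ?_⟩
    show (m + τ m) + (m - τ m) = (2 : ℤ_[2]) • m
    rw [two_smul]
    abel
end

section
/- Let ℓ and p be distinct prime numbers. Then the topological closure in ℤℓ^× of the subgroup generated by the unit (p : ℤℓ^×) is an open subgroup of ℤℓ^×. (This is the arithmetic content of the assertion that places not dividing ℓ are almost totally inert — i.e., have open decomposition group — in the cyclotomic ℤℓ-tower, used in the proof of the Scolie.) -/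
open PadicInt Filter

section Aux

variable {ℓ : ℕ} [Fact (Nat.Prime ℓ)]

/-- Binomial-type expansion: `(1+x)^n = 1 + n*x + x^2*c`. -/
lemma aux_pow_one_add {R : Type*} [CommRing R] (x : R) (n : ℕ) :
    ∃ c : R, (1 + x) ^ n = 1 + (n : R) * x + x ^ 2 * c := by
  induction n with
  | zero => exact ⟨0, by simp⟩
  | succ n ih =>
    obtain ⟨c, hc⟩ := ih
    exact ⟨(n : R) + c + c * x, by rw [pow_succ, hc]; push_cast; ring⟩

lemma aux_norm_one_add {x z : ℤ_[ℓ]} (hx : ‖x‖ = 1) (hz : ‖z‖ < 1) : ‖x + z‖ = 1 := by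
  refine le_antisymm (PadicInt.norm_le_one _) ?_
  have h : ‖x + z + -z‖ ≤ max ‖x + z‖ ‖-z‖ := PadicInt.nonarchimedean _ _
  rw [add_neg_cancel_right, hx, norm_neg] at h
  rcases le_max_iff.1 h with h' | h'
  · exact h'
  · exact absurd h' (not_le.2 hz)

lemma aux_norm_lt_one (k : ℕ) (z : ℤ_[ℓ]) : ‖(ℓ : ℤ_[ℓ]) ^ (k + 1) * z‖ < 1 := by
  have hℓ : (1 : ℝ) < ℓ := by exact_mod_cast (Fact.out : Nat.Prime ℓ).one_lt
  calc ‖(ℓ : ℤ_[ℓ]) ^ (k + 1) * z‖ ≤ ‖(ℓ : ℤ_[ℓ]) ^ (k + 1)‖ * 1 := by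
        rw [norm_mul]
        exact mul_le_mul_of_nonneg_left (PadicInt.norm_le_one z) (norm_nonneg _)
    _ = ((ℓ : ℝ)⁻¹) ^ (k + 1) := by rw [mul_one, norm_pow, PadicInt.norm_p]
    _ < 1 := pow_lt_one₀ (by positivity) (inv_lt_one_of_one_lt₀ hℓ) (Nat.succ_ne_zero k)

/-- One step: raising `1 + ℓ^(k+2) x` (with `x` a unit) to the `ℓ`-th power. -/
lemma aux_step (k : ℕ) {x : ℤ_[ℓ]} (hx : ‖x‖ = 1) :
    ∃ y : ℤ_[ℓ], ‖y‖ = 1 ∧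
      (1 + (ℓ : ℤ_[ℓ]) ^ (k + 2) * x) ^ ℓ = 1 + (ℓ : ℤ_[ℓ]) ^ (k + 3) * y := by
  obtain ⟨c, hc⟩ := aux_pow_one_add ((ℓ : ℤ_[ℓ]) ^ (k + 2) * x) ℓ
  refine ⟨x + (ℓ : ℤ_[ℓ]) ^ (k + 1) * (x ^ 2 * c), ?_, ?_⟩
  · exact aux_norm_one_add hx (aux_norm_lt_one k _)
  · rw [hc]; ring

/-- Iterated: `(1 + ℓ^(k+2) x)^(ℓ^n) = 1 + ℓ^(k+2+n) y` with `y` a unit. -/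
lemma aux_iterate (k : ℕ) {x : ℤ_[ℓ]} (hx : ‖x‖ = 1) (n : ℕ) :
    ∃ y : ℤ_[ℓ], ‖y‖ = 1 ∧
      (1 + (ℓ : ℤ_[ℓ]) ^ (k + 2) * x) ^ (ℓ ^ n) = 1 + (ℓ : ℤ_[ℓ]) ^ (k + 2 + n) * y := by
  induction n with
  | zero => exact ⟨x, hx, by simp⟩
  | succ n ih =>
    obtain ⟨y, hy, hpow⟩ := ih
    obtain ⟨y', hy', hpow'⟩ := aux_step (k + n) hy
    refine ⟨y', hy', ?_⟩
    have e1 : k + 2 + n = k + n + 2 := by ring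
    have e2 : k + 2 + (n + 1) = k + n + 3 := by ring
    rw [pow_succ ℓ n, pow_mul, hpow, e1, hpow', e2]

/-- Every element of `ℤ_[ℓ]` is congruent to a natural number mod `ℓ`. -/
lemma aux_exists_nat (z : ℤ_[ℓ]) : ∃ s : ℕ, (ℓ : ℤ_[ℓ]) ∣ (z - s) := by
  refine ⟨zmodRepr z, ?_⟩
  have h := sub_zmodRepr_mem z
  rwa [maximalIdeal_eq_span_p, Ideal.mem_span_singleton] at h

lemma aux_approx (k : ℕ) {x w : ℤ_[ℓ]} (hx : ‖x‖ = 1) (hw : ‖w‖ = 1)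
    (hw1 : (ℓ : ℤ_[ℓ]) ^ (k + 2) ∣ (1 - w)) (n : ℕ) :
    ∃ t : ℕ, (ℓ : ℤ_[ℓ]) ^ (k + 2 + n) ∣ ((1 + (ℓ : ℤ_[ℓ]) ^ (k + 2) * x) ^ t - w) := by
  set v : ℤ_[ℓ] := 1 + (ℓ : ℤ_[ℓ]) ^ (k + 2) * x with hv
  have hvnorm : ‖v‖ = 1 := aux_norm_one_add (by simp)
    (by simpa using aux_norm_lt_one (k + 1) x)
  induction n with
  | zero => exact ⟨0, by simpa using hw1⟩
  | succ n ih =>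
    obtain ⟨t, d, hd⟩ := ih
    obtain ⟨y, hy, hpow⟩ := aux_iterate k hx n
    rw [← hv] at hpow
    have hg : IsUnit (v ^ t * y) := by
      rw [PadicInt.isUnit_iff, norm_mul, norm_pow, hvnorm, hy]
      simp
    obtain ⟨G, hG⟩ := hg
    obtain ⟨s, s', hs⟩ := aux_exists_nat (-(d * (↑G⁻¹ : ℤ_[ℓ])))
    have h2 : (↑G⁻¹ : ℤ_[ℓ]) * (v ^ t * y) = 1 := by
      rw [← hG, ← Units.val_mul, inv_mul_cancel, Units.val_one]
    have hkey : -(d + (s : ℤ_[ℓ]) * (v ^ t * y)) = (ℓ : ℤ_[ℓ]) * (s' * (v ^ t * y)) := by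
      linear_combination (v ^ t * y) * hs + d * h2
    have hdiv : (ℓ : ℤ_[ℓ]) ∣ (d + (s : ℤ_[ℓ]) * (v ^ t * y)) := dvd_neg.1 ⟨_, hkey⟩
    obtain ⟨e, he⟩ := hdiv
    obtain ⟨c, hc⟩ := aux_pow_one_add ((ℓ : ℤ_[ℓ]) ^ (k + 2 + n) * y) s
    refine ⟨t + s * ℓ ^ n, (e + (ℓ : ℤ_[ℓ]) ^ (k + 1 + n) * (v ^ t * (y ^ 2 * c))), ?_⟩
    have hvts : v ^ (t + s * ℓ ^ n) = v ^ t * (1 + (s : ℤ_[ℓ]) * ((ℓ : ℤ_[ℓ]) ^ (k + 2 + n) * y)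
        + ((ℓ : ℤ_[ℓ]) ^ (k + 2 + n) * y) ^ 2 * c) := by
      rw [pow_add, pow_mul', hpow, hc]
    rw [hvts]
    linear_combination (1 : ℤ_[ℓ]) * hd + (ℓ : ℤ_[ℓ]) ^ (k + 2 + n) * he

end Aux

/-- Limit lemma: if `W` is approximated `ℓ`-adically by powers `V^t`, then `W` lies in the
closure of the subgroup generated by `V`. -/
lemma aux_mem_closure {ℓ : ℕ} [Fact (Nat.Prime ℓ)] {V W : ℤ_[ℓ]ˣ}
    (h : ∀ n : ℕ, ∃ t : ℕ, (ℓ : ℤ_[ℓ]) ^ n ∣ ((V : ℤ_[ℓ]) ^ t - (W : ℤ_[ℓ]))) :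
    W ∈ closure ((Subgroup.zpowers V : Subgroup ℤ_[ℓ]ˣ) : Set ℤ_[ℓ]ˣ) := by
  choose t ht using h
  have hℓ1 : (1 : ℝ) < ℓ := by exact_mod_cast (Fact.out : Nat.Prime ℓ).one_lt
  have hb : ∀ n : ℕ, ‖(V : ℤ_[ℓ]) ^ (t n) - (W : ℤ_[ℓ])‖ ≤ ((ℓ : ℝ)⁻¹) ^ n := by
    intro n
    have := (PadicInt.norm_le_pow_iff_mem_span_pow ((V : ℤ_[ℓ]) ^ (t n) - (W : ℤ_[ℓ])) n).2
      (Ideal.mem_span_singleton.2 (ht n))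
    rwa [zpow_neg, zpow_natCast, ← inv_pow] at this
  have h0 : Filter.Tendsto (fun n : ℕ => ((ℓ : ℝ)⁻¹) ^ n) atTop (nhds 0) :=
    tendsto_pow_atTop_nhds_zero_of_lt_one (by positivity) (inv_lt_one_of_one_lt₀ hℓ1)
  have h1 : Filter.Tendsto (fun n => ((V ^ (t n) : ℤ_[ℓ]ˣ) : ℤ_[ℓ])) atTop
      (nhds (W : ℤ_[ℓ])) := by
    refine tendsto_iff_dist_tendsto_zero.2 (squeeze_zero (fun n => dist_nonneg) (fun n => ?_) h0)
    rw [dist_eq_norm, Units.val_pow_eq_pow_val]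
    exact hb n
  have hinveq : ∀ (A B : ℤ_[ℓ]ˣ),
      ((A⁻¹ : ℤ_[ℓ]ˣ) : ℤ_[ℓ]) - ((B⁻¹ : ℤ_[ℓ]ˣ) : ℤ_[ℓ])
        = (A⁻¹ : ℤ_[ℓ]ˣ) * ((B⁻¹ : ℤ_[ℓ]ˣ) : ℤ_[ℓ]) * ((B : ℤ_[ℓ]) - (A : ℤ_[ℓ])) := by
    intro A B
    have hA : ((A⁻¹ : ℤ_[ℓ]ˣ) : ℤ_[ℓ]) * (A : ℤ_[ℓ]) = 1 := by
      rw [← Units.val_mul, inv_mul_cancel, Units.val_one]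
    have hB : ((B⁻¹ : ℤ_[ℓ]ˣ) : ℤ_[ℓ]) * (B : ℤ_[ℓ]) = 1 := by
      rw [← Units.val_mul, inv_mul_cancel, Units.val_one]
    linear_combination (-((A⁻¹ : ℤ_[ℓ]ˣ) : ℤ_[ℓ])) * hB + ((B⁻¹ : ℤ_[ℓ]ˣ) : ℤ_[ℓ]) * hA
  have h2 : Filter.Tendsto (fun n => (((V ^ (t n))⁻¹ : ℤ_[ℓ]ˣ) : ℤ_[ℓ])) atTop
      (nhds ((W⁻¹ : ℤ_[ℓ]ˣ) : ℤ_[ℓ])) := by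
    refine tendsto_iff_dist_tendsto_zero.2 (squeeze_zero (fun n => dist_nonneg) (fun n => ?_) h0)
    rw [dist_eq_norm, hinveq (V ^ (t n)) W, norm_mul, norm_mul,
      PadicInt.norm_units, PadicInt.norm_units, one_mul, one_mul, norm_sub_rev,
      Units.val_pow_eq_pow_val]
    exact hb n
  have htends : Filter.Tendsto (fun n => V ^ (t n)) atTop (nhds W) := by
    rw [Units.isInducing_embedProduct.tendsto_nhds_iff]
    exact Filter.Tendsto.prodMk_nhds h1 ((MulOpposite.continuous_op.tendsto _).comp h2)
  refine mem_closure_of_tendsto htends (Filter.Eventually.of_forall fun n => ?_)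
  exact SetLike.mem_coe.2 (Subgroup.mem_zpowers_iff.2 ⟨(t n : ℤ), zpow_natCast V (t n)⟩)


/-- Let `ℓ` and `p` be distinct primes.  Then the topological closure in
`ℤℓˣ` of the subgroup generated by the unit `(p : ℤℓˣ)` is an open subgroup of `ℤℓˣ`. -/
theorem closure_zpowers_isOpen
    (ℓ p : ℕ) [Fact (Nat.Prime ℓ)] (hp : Nat.Prime p) (hpl : p ≠ ℓ)
    (u : ℤ_[ℓ]ˣ) (hu : (u : ℤ_[ℓ]) = (p : ℤ_[ℓ])) :
    IsOpen (closure ((Subgroup.zpowers u : Subgroup ℤ_[ℓ]ˣ) : Set ℤ_[ℓ]ˣ)) := by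
  have hℓprime : Nat.Prime ℓ := Fact.out
  set m : ℕ := Nat.totient (ℓ ^ 3) with hm
  have hmpos : 0 < m := Nat.totient_pos.2 (pow_pos hℓprime.pos 3)
  -- `u ^ m ≡ 1 mod ℓ^3`
  have hker : (ℓ : ℤ_[ℓ]) ^ 3 ∣ ((u : ℤ_[ℓ]) ^ m - 1) := by
    have h1 : (Units.map (PadicInt.toZModPow (p := ℓ) 3).toMonoidHom u) ^ m = 1 :=
      ZMod.pow_totient _
    have h2 : (PadicInt.toZModPow (p := ℓ) 3) ((u : ℤ_[ℓ]) ^ m - 1) = 0 := by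
      have h1' := congrArg Units.val h1
      simp only [Units.val_pow_eq_pow_val, Units.coe_map, Units.val_one,
        RingHom.toMonoidHom_eq_coe, MonoidHom.coe_coe] at h1'
      rw [map_sub, map_pow, map_one, h1', sub_self]
    have h3 : ((u : ℤ_[ℓ]) ^ m - 1) ∈ RingHom.ker (PadicInt.toZModPow (p := ℓ) 3) := h2
    rw [PadicInt.ker_toZModPow, Ideal.mem_span_singleton] at h3
    exact h3
  -- `u ^ m ≠ 1`
  have ha : (u : ℤ_[ℓ]) ^ m - 1 ≠ 0 := by
    intro h0
    have h1 : (u : ℤ_[ℓ]) ^ m = 1 := sub_eq_zero.1 h0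
    rw [hu] at h1
    have h2 : ((p ^ m : ℕ) : ℤ_[ℓ]) = ((1 : ℕ) : ℤ_[ℓ]) := by push_cast; simpa using h1
    have h3 : p ^ m = 1 := Nat.cast_injective h2
    have h4 : 1 < p ^ m := Nat.one_lt_pow hmpos.ne' hp.one_lt
    omega
  set K : ℕ := ((u : ℤ_[ℓ]) ^ m - 1).valuation with hKdef
  have hspec : (u : ℤ_[ℓ]) ^ m - 1 = (PadicInt.unitCoeff ha : ℤ_[ℓ]) * (ℓ : ℤ_[ℓ]) ^ K :=
    PadicInt.unitCoeff_spec ha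
  have hK3 : 3 ≤ K := by
    have hnorm : ‖(u : ℤ_[ℓ]) ^ m - 1‖ ≤ (ℓ : ℝ) ^ (-(3 : ℕ) : ℤ) :=
      (PadicInt.norm_le_pow_iff_mem_span_pow _ 3).2 (Ideal.mem_span_singleton.2 hker)
    have hval : (3 : ℤ) ≤ ((u : ℤ_[ℓ]) ^ m - 1).valuation := by
      have := (PadicInt.norm_le_pow_iff_le_valuation _ ha 3).1 hnorm
      exact_mod_cast this
    omega
  obtain ⟨k, hk⟩ : ∃ k, K = k + 2 := ⟨K - 2, by omega⟩
  set x : ℤ_[ℓ] := (PadicInt.unitCoeff ha : ℤ_[ℓ]) with hxdef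
  have hx : ‖x‖ = 1 := PadicInt.norm_units _
  have hv : (u : ℤ_[ℓ]) ^ m = 1 + (ℓ : ℤ_[ℓ]) ^ (k + 2) * x := by
    rw [hk] at hspec
    linear_combination hspec
  -- the small ball of units is contained in the closure of `zpowers u`
  have hsub : {W : ℤ_[ℓ]ˣ | (ℓ : ℤ_[ℓ]) ^ (k + 2) ∣ ((W : ℤ_[ℓ]) - 1)} ⊆
      closure ((Subgroup.zpowers u : Subgroup ℤ_[ℓ]ˣ) : Set ℤ_[ℓ]ˣ) := by
    intro W hW
    have hWmem : W ∈ closure ((Subgroup.zpowers (u ^ m) : Subgroup ℤ_[ℓ]ˣ) : Set ℤ_[ℓ]ˣ) := by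
      apply aux_mem_closure
      intro n
      obtain ⟨t, htt⟩ := aux_approx k hx (PadicInt.norm_units W)
        (dvd_sub_comm.1 hW) n
      refine ⟨t, dvd_trans (pow_dvd_pow (ℓ : ℤ_[ℓ]) (Nat.le_add_left n (k + 2))) ?_⟩
      rwa [Units.val_pow_eq_pow_val, hv]
    have hle : Subgroup.zpowers (u ^ m) ≤ Subgroup.zpowers u :=
      Subgroup.zpowers_le.2 ⟨(m : ℤ), zpow_natCast u m⟩
    exact closure_mono (SetLike.coe_subset_coe.2 hle) hWmem
  -- the ball is an open neighbourhood of `1`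
  have hcont : Continuous fun W : ℤ_[ℓ]ˣ => ((W : ℤ_[ℓ]) - 1) :=
    Units.continuous_val.sub continuous_const
  have hopen : IsOpen {W : ℤ_[ℓ]ˣ | ‖((W : ℤ_[ℓ]) - 1)‖ < (ℓ : ℝ) ^ (-(k + 1 : ℕ) : ℤ)} :=
    isOpen_lt hcont.norm continuous_const
  have hballeq : ∀ W : ℤ_[ℓ]ˣ, ‖((W : ℤ_[ℓ]) - 1)‖ < (ℓ : ℝ) ^ (-(k + 1 : ℕ) : ℤ) ↔
      (ℓ : ℤ_[ℓ]) ^ (k + 2) ∣ ((W : ℤ_[ℓ]) - 1) := by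
    intro W
    have hexp : (-(k + 1 : ℕ) : ℤ) = (-(k + 2 : ℕ) : ℤ) + 1 := by push_cast; ring
    rw [hexp, ← PadicInt.norm_le_pow_iff_norm_lt_pow_add_one,
      PadicInt.norm_le_pow_iff_mem_span_pow, Ideal.mem_span_singleton]
  have hmem1 : (1 : ℤ_[ℓ]ˣ) ∈
      {W : ℤ_[ℓ]ˣ | ‖((W : ℤ_[ℓ]) - 1)‖ < (ℓ : ℝ) ^ (-(k + 1 : ℕ) : ℤ)} := by
    simp only [Set.mem_setOf_eq, Units.val_one, sub_self, norm_zero]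
    have hℓ0 : (0 : ℝ) < (ℓ : ℝ) := by exact_mod_cast hℓprime.pos
    exact zpow_pos hℓ0 _
  have hnhds : closure ((Subgroup.zpowers u : Subgroup ℤ_[ℓ]ˣ) : Set ℤ_[ℓ]ˣ) ∈
      nhds (1 : ℤ_[ℓ]ˣ) := by
    refine Filter.mem_of_superset (hopen.mem_nhds hmem1) ?_
    intro W hW
    exact hsub ((hballeq W).1 hW)
  have := Subgroup.isOpen_of_mem_nhds (G := ℤ_[ℓ]ˣ)
    (Subgroup.zpowers u).topologicalClosure
    (by rwa [Subgroup.topologicalClosure_coe])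
  rwa [Subgroup.topologicalClosure_coe] at this
end

section
/- Let ℓ be a prime and Λ = ℤℓ[[X]]. If f, g ∈ Λ are nonzero elements with no common non-unit divisor (i.e., f and g are coprime in the unique factorization domain Λ), then the quotient ring Λ/(f, g) is finite. (This coprimality criterion is the key finiteness input in the structure-theoretic arguments relating invariants and coinvariants of torsion Iwasawa modules.) -/
open PowerSeries Ideal

section IwasawaAux
variable {ℓ : ℕ} [Fact (Nat.Prime ℓ)]


/-- non-units of ℤ_[ℓ] are divisible by ℓ -/
lemma padic_not_isUnit_iff {x : ℤ_[ℓ]} : ¬ IsUnit x ↔ (ℓ : ℤ_[ℓ]) ∣ x := by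
  rw [PadicInt.not_isUnit_iff, PadicInt.norm_lt_one_iff_dvd]

lemma padic_eq_zero_of_forall_pow_dvd {x : ℤ_[ℓ]} (h : ∀ k, (ℓ : ℤ_[ℓ])^k ∣ x) : x = 0 := by
  by_contra hx
  have hp : (1 : ℕ) < ℓ := (Fact.out : Nat.Prime ℓ).one_lt
  have h0 : (0:ℝ) < ‖x‖ := by simpa [norm_pos_iff] using hx
  have hinv : (ℓ : ℝ)⁻¹ < 1 := by
    rw [inv_lt_one_iff₀]
    right; exact_mod_cast hp
  obtain ⟨k, hk⟩ := exists_pow_lt_of_lt_one h0 hinv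
  have : ‖x‖ ≤ (ℓ : ℝ) ^ (-(k:ℤ)) := by
    rw [PadicInt.norm_le_pow_iff_mem_span_pow]
    exact Ideal.mem_span_singleton.mpr (h k)
  rw [zpow_neg, zpow_natCast, ← inv_pow] at this
  exact absurd (lt_of_le_of_lt this hk) (lt_irrefl _)

lemma C_dvd_iff {a : ℤ_[ℓ]} {h : PowerSeries ℤ_[ℓ]} :
    (C (R := ℤ_[ℓ]) a) ∣ h ↔ ∀ i, a ∣ coeff (R := ℤ_[ℓ]) i h := by
  constructor
  · rintro ⟨k, rfl⟩ i
    rw [coeff_C_mul]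
    exact Dvd.intro _ rfl
  · intro hi
    choose e he using hi
    refine ⟨PowerSeries.mk e, ?_⟩
    ext i
    rw [coeff_C_mul, coeff_mk, ← he]

/-- strip off the maximal power of ℓ from a nonzero power series -/
lemma strip_ell {h : PowerSeries ℤ_[ℓ]} (h0 : h ≠ 0) :
    ∃ (c : ℕ) (h₁ : PowerSeries ℤ_[ℓ]), h = C (R := ℤ_[ℓ]) ((ℓ:ℤ_[ℓ])^c) * h₁ ∧
      ∃ i, IsUnit (coeff (R := ℤ_[ℓ]) i h₁) := by
  classical
  have hex : ∃ c, ∃ i, ¬ ((ℓ:ℤ_[ℓ])^(c+1) ∣ coeff (R := ℤ_[ℓ]) i h) := by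
    obtain ⟨i, hi⟩ : ∃ i, coeff (R := ℤ_[ℓ]) i h ≠ 0 := by
      by_contra hc
      push_neg at hc
      exact h0 (PowerSeries.ext fun i => by simpa using hc i)
    by_contra hc
    push_neg at hc
    refine hi (padic_eq_zero_of_forall_pow_dvd fun k => ?_)
    exact (pow_dvd_pow _ (Nat.le_succ k)).trans (hc k i)
  set c := Nat.find hex with hc
  have hdvd : ∀ i, (ℓ:ℤ_[ℓ])^c ∣ coeff (R := ℤ_[ℓ]) i h := by
    intro i
    rcases Nat.eq_zero_or_pos c with h0c | h0c
    · rw [h0c]; exact one_dvd _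
    · have := Nat.find_min hex (m := c - 1) (by omega)
      push_neg at this
      have := this i
      rwa [Nat.sub_add_cancel h0c] at this
  choose e he using hdvd
  refine ⟨c, PowerSeries.mk e, ?_, ?_⟩
  · ext i
    rw [coeff_C_mul, coeff_mk, ← he]
  · obtain ⟨i, hi⟩ := Nat.find_spec hex
    refine ⟨i, ?_⟩
    rw [← hc] at hi
    by_contra hu
    rw [padic_not_isUnit_iff, coeff_mk] at hu
    refine hi ?_
    rw [he i, pow_succ]
    exact mul_dvd_mul_left _ hu

/-- ℓ-adic limits of coefficientwise Cauchy sequences -/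
lemma padic_limit (a : ℕ → ℤ_[ℓ]) (ha : ∀ k, (ℓ:ℤ_[ℓ])^k ∣ a (k+1) - a k) :
    ∃ L, ∀ k, (ℓ:ℤ_[ℓ])^k ∣ L - a k := by
  have hsm : ∀ m : ℕ, ((IsLocalRing.maximalIdeal ℤ_[ℓ]) ^ m • ⊤ : Submodule ℤ_[ℓ] ℤ_[ℓ])
      = Ideal.span {(ℓ:ℤ_[ℓ])^m} := by
    intro m
    rw [smul_eq_mul, Ideal.mul_top, PadicInt.maximalIdeal_eq_span_p, Ideal.span_singleton_pow]
  have key : ∀ {m n : ℕ}, m ≤ n → (ℓ:ℤ_[ℓ])^m ∣ a n - a m := by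
    intro m n hmn
    induction n with
    | zero => simp [Nat.le_zero.mp hmn]
    | succ n ih =>
      rcases Nat.lt_or_ge m (n+1) with h | h
      · have h1 : m ≤ n := by omega
        have : a (n+1) - a m = (a (n+1) - a n) + (a n - a m) := by ring
        rw [this]
        exact dvd_add ((pow_dvd_pow _ h1).trans (ha n)) (ih h1)
      · have : m = n + 1 := by omega
        simp [this]
  obtain ⟨L, hL⟩ := IsPrecomplete.prec (IsAdicComplete.toIsPrecomplete
      (I := IsLocalRing.maximalIdeal ℤ_[ℓ])) (f := a) (by
    intro m n hmn
    rw [SModEq.sub_mem, hsm, Ideal.mem_span_singleton]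
    exact dvd_sub_comm.mp (key hmn))
  refine ⟨L, fun k => ?_⟩
  have := hL k
  rw [SModEq.sub_mem, hsm, Ideal.mem_span_singleton] at this
  exact dvd_sub_comm.mp this

/-- Weierstrass division by `X^n + B` with `B ≡ 0 mod ℓ` (existence only). -/
lemma wdiv (n : ℕ) (B g : PowerSeries ℤ_[ℓ]) (hB : ∀ i, (ℓ:ℤ_[ℓ]) ∣ coeff (R := ℤ_[ℓ]) i B) :
    ∃ q r : PowerSeries ℤ_[ℓ], g = q * (X^n + B) + r ∧ ∀ i, n ≤ i → coeff (R := ℤ_[ℓ]) i r = 0 := by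
  set Φ : PowerSeries ℤ_[ℓ] → PowerSeries ℤ_[ℓ] :=
    fun q => (PowerSeries.mk fun i => coeff (R := ℤ_[ℓ]) (n+i) g) -
             (PowerSeries.mk fun i => coeff (R := ℤ_[ℓ]) (n+i) (q * B)) with hΦ
  have hΦc : ∀ q i, coeff (R := ℤ_[ℓ]) i (Φ q) = coeff (R := ℤ_[ℓ]) (n+i) g - coeff (R := ℤ_[ℓ]) (n+i) (q*B) := by
    intro q i; rw [hΦ]; simp [coeff_mk]
  have hcontr : ∀ (k : ℕ) (q q' : PowerSeries ℤ_[ℓ]),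
      (∀ i, (ℓ:ℤ_[ℓ])^k ∣ coeff (R := ℤ_[ℓ]) i (q - q')) →
      ∀ i, (ℓ:ℤ_[ℓ])^(k+1) ∣ coeff (R := ℤ_[ℓ]) i (Φ q - Φ q') := by
    intro k q q' hqq i
    have : coeff (R := ℤ_[ℓ]) i (Φ q - Φ q') = - coeff (R := ℤ_[ℓ]) (n+i) ((q - q') * B) := by
      rw [map_sub, hΦc, hΦc, sub_mul, map_sub]; ring
    rw [this, dvd_neg, PowerSeries.coeff_mul]
    refine Finset.dvd_sum fun p hp => ?_
    rw [pow_succ]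
    exact mul_dvd_mul (hqq p.1) (hB p.2)
  set a : ℕ → PowerSeries ℤ_[ℓ] := fun k => Φ^[k] 0 with hA
  have hstep : ∀ k i, (ℓ:ℤ_[ℓ])^k ∣ coeff (R := ℤ_[ℓ]) i (a (k+1) - a k) := by
    intro k
    induction k with
    | zero => intro i; simp
    | succ k ih =>
      have h1 : a (k+2) = Φ (a (k+1)) := Function.iterate_succ_apply' _ _ _
      have h2 : a (k+1) = Φ (a k) := Function.iterate_succ_apply' _ _ _
      intro i
      have := hcontr k (a (k+1)) (a k) ih i
      rwa [← h1, ← h2] at this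
  have hlim : ∀ i, ∃ L, ∀ k, (ℓ:ℤ_[ℓ])^k ∣ L - coeff (R := ℤ_[ℓ]) i (a k) := by
    intro i
    refine padic_limit (fun k => coeff (R := ℤ_[ℓ]) i (a k)) fun k => ?_
    rw [← map_sub]
    exact hstep k i
  choose L hL using hlim
  set q : PowerSeries ℤ_[ℓ] := PowerSeries.mk L with hq
  have hqa : ∀ k i, (ℓ:ℤ_[ℓ])^k ∣ coeff (R := ℤ_[ℓ]) i (q - a k) := by
    intro k i
    rw [map_sub, hq, coeff_mk]
    exact hL i k
  have hfix : ∀ i, coeff (R := ℤ_[ℓ]) i q = coeff (R := ℤ_[ℓ]) i (Φ q) := by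
    intro i
    rw [← sub_eq_zero, ← map_sub]
    refine padic_eq_zero_of_forall_pow_dvd fun k => ?_
    have hd : q - Φ q = (q - a (k+1)) + (Φ (a k) - Φ q) := by
      have : a (k+1) = Φ (a k) := Function.iterate_succ_apply' _ _ _
      rw [this]; ring
    rw [hd, map_add]
    refine dvd_add ((pow_dvd_pow _ (Nat.le_succ k)).trans (hqa (k+1) i)) ?_
    refine (pow_dvd_pow _ (Nat.le_succ k)).trans (hcontr k (a k) q (fun j => ?_) i)
    have := hqa k j
    rw [← dvd_neg] at this
    simpa [map_sub, neg_sub] using this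
  refine ⟨q, g - q * (X^n + B), by ring, fun i hi => ?_⟩
  obtain ⟨j, rfl⟩ := Nat.exists_eq_add_of_le hi
  have hfj := hfix j
  rw [hΦc] at hfj
  have hXq : coeff (R := ℤ_[ℓ]) (n+j) (q * X^n) = coeff (R := ℤ_[ℓ]) j q := by
    rw [mul_comm, add_comm, coeff_X_pow_mul]
  rw [map_sub, mul_add, map_add, hXq]
  rw [hfj]
  ring

lemma wdiv_general (f : PowerSeries ℤ_[ℓ]) (n : ℕ) (hn : IsUnit (coeff (R := ℤ_[ℓ]) n f))
    (hmin : ∀ i, i < n → ¬ IsUnit (coeff (R := ℤ_[ℓ]) i f)) (g : PowerSeries ℤ_[ℓ]) :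
    ∃ q r : PowerSeries ℤ_[ℓ], g = q * f + r ∧ ∀ i, n ≤ i → coeff (R := ℤ_[ℓ]) i r = 0 := by
  classical
  set T : PowerSeries ℤ_[ℓ] := PowerSeries.mk fun i => if i < n then coeff (R := ℤ_[ℓ]) i f else 0 with hT
  set U : PowerSeries ℤ_[ℓ] := PowerSeries.mk fun i => coeff (R := ℤ_[ℓ]) (n+i) f with hU
  have hdecomp : f = T + X^n * U := by
    ext i
    rw [map_add, coeff_X_pow_mul', hT, hU]
    simp only [coeff_mk]
    rcases Nat.lt_or_ge i n with h | h
    · simp [h, Nat.not_le_of_lt h]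
    · have : n + (i - n) = i := by omega
      simp [h, Nat.not_lt_of_le h, this]
  have hUunit : IsUnit U := by
    rw [PowerSeries.isUnit_iff_constantCoeff]
    have h1 : constantCoeff (R := ℤ_[ℓ]) U = coeff (R := ℤ_[ℓ]) n f := by
      rw [← coeff_zero_eq_constantCoeff_apply, hU, coeff_mk, Nat.add_zero]
    rwa [h1]
  obtain ⟨u, hu⟩ := hUunit
  have hB : ∀ i, (ℓ:ℤ_[ℓ]) ∣ coeff (R := ℤ_[ℓ]) i (T * (↑u⁻¹ : PowerSeries ℤ_[ℓ])) := by
    intro i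
    rw [PowerSeries.coeff_mul]
    refine Finset.dvd_sum fun p hp => ?_
    refine Dvd.dvd.mul_right ?_ _
    rw [hT, coeff_mk]
    rcases Nat.lt_or_ge p.1 n with h | h
    · simpa [h] using padic_not_isUnit_iff.mp (hmin p.1 h)
    · simp [Nat.not_lt_of_le h]
  have hfeq : (X^n + T * (↑u⁻¹ : PowerSeries ℤ_[ℓ])) * (↑u : PowerSeries ℤ_[ℓ]) = f := by
    have h2 : T * (↑u⁻¹ : PowerSeries ℤ_[ℓ]) * (↑u : PowerSeries ℤ_[ℓ]) = T := by
      rw [mul_assoc, Units.inv_mul, mul_one]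
    rw [add_mul, h2, hu, hdecomp]; ring
  have hfV : f * (↑u⁻¹ : PowerSeries ℤ_[ℓ]) = X^n + T * (↑u⁻¹ : PowerSeries ℤ_[ℓ]) := by
    rw [← hfeq, mul_assoc, Units.mul_inv, mul_one]
  obtain ⟨q, r, hqr, hr⟩ := wdiv n (T * (↑u⁻¹ : PowerSeries ℤ_[ℓ])) g hB
  refine ⟨q * (↑u⁻¹ : PowerSeries ℤ_[ℓ]), r, ?_, hr⟩
  rw [hqr, ← hfV]
  ring

lemma euclid_asym : ∀ N : ℕ, ∀ f g : PowerSeries ℤ_[ℓ], ∀ nf : ℕ,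
    IsUnit (coeff (R := ℤ_[ℓ]) nf f) → (∀ i, i < nf → ¬ IsUnit (coeff (R := ℤ_[ℓ]) i f)) →
    (∀ d, d ∣ f → d ∣ g → IsUnit d) → nf ≤ N →
    ∃ k, C (R := ℤ_[ℓ]) ((ℓ:ℤ_[ℓ])^k) ∈ Ideal.span {f, g} := by
  intro N
  induction N using Nat.strong_induction_on with
  | _ N IH =>
    intro f g nf hnf hminf hcop hN
    classical
    rcases Nat.eq_zero_or_pos nf with h0 | h0
    · -- f is a unit
      have hfu : IsUnit f := by
        rw [PowerSeries.isUnit_iff_constantCoeff, ← coeff_zero_eq_constantCoeff_apply, ← h0]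
        exact hnf
      refine ⟨0, ?_⟩
      have : Ideal.span ({f, g} : Set (PowerSeries ℤ_[ℓ])) = ⊤ :=
        Ideal.eq_top_of_isUnit_mem _ (Ideal.subset_span (by simp)) hfu
      rw [this]
      exact Submodule.mem_top
    · obtain ⟨q, r, hqr, hr⟩ := wdiv_general f nf hnf hminf g
      have hrne : r ≠ 0 := by
        rintro rfl
        have hfg : f ∣ g := ⟨q, by rw [hqr]; ring⟩
        have hfu : IsUnit f := hcop f dvd_rfl hfg
        have h00 : IsUnit (coeff (R := ℤ_[ℓ]) 0 f) := by
          rw [coeff_zero_eq_constantCoeff_apply]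
          exact hfu.map (constantCoeff (R := ℤ_[ℓ]))
        exact hminf 0 h0 h00
      obtain ⟨c, r₁, hr₁, hu₁⟩ := strip_ell hrne
      have hℓc : ((ℓ:ℤ_[ℓ])^c) ≠ 0 :=
        pow_ne_zero _ (Nat.cast_ne_zero.mpr (Fact.out : Nat.Prime ℓ).ne_zero)
      have hr₁0 : ∀ i, nf ≤ i → coeff (R := ℤ_[ℓ]) i r₁ = 0 := by
        intro i hi
        have h3 := hr i hi
        rw [hr₁, coeff_C_mul] at h3
        exact (mul_eq_zero.mp h3).resolve_left hℓc
      have hfind₁ : Nat.find hu₁ < nf := by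
        by_contra hcon
        push_neg at hcon
        have h4 := Nat.find_spec hu₁
        rw [hr₁0 _ hcon] at h4
        exact not_isUnit_zero h4
      have hcop' : ∀ d, d ∣ r₁ → d ∣ f → IsUnit d := by
        intro d hdr hdf
        refine hcop d hdf ?_
        rw [hqr, hr₁]
        exact dvd_add (hdf.mul_left q) ((hdr.mul_left _))
      obtain ⟨k, hk⟩ := IH (Nat.find hu₁) (by omega) r₁ f (Nat.find hu₁)
        (Nat.find_spec hu₁) (fun i hi => Nat.find_min hu₁ hi) hcop' le_rfl
      rw [Ideal.mem_span_pair] at hk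
      obtain ⟨u, v, huv⟩ := hk
      refine ⟨c + k, Ideal.mem_span_pair.mpr ⟨C (R := ℤ_[ℓ]) ((ℓ:ℤ_[ℓ])^c) * v - u * q, u, ?_⟩⟩
      have hCC : C (R := ℤ_[ℓ]) ((ℓ:ℤ_[ℓ])^(c+k))
          = C (R := ℤ_[ℓ]) ((ℓ:ℤ_[ℓ])^c) * C (R := ℤ_[ℓ]) ((ℓ:ℤ_[ℓ])^k) := by
        rw [← _root_.map_mul, pow_add]
      rw [hqr, hr₁, hCC]
      linear_combination (C (R := ℤ_[ℓ]) ((ℓ:ℤ_[ℓ])^c)) * huv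

lemma euclid (f g : PowerSeries ℤ_[ℓ])
    (hf : ∃ i, IsUnit (coeff (R := ℤ_[ℓ]) i f)) (hg : ∃ i, IsUnit (coeff (R := ℤ_[ℓ]) i g))
    (hcop : ∀ d, d ∣ f → d ∣ g → IsUnit d) :
    ∃ k, C (R := ℤ_[ℓ]) ((ℓ:ℤ_[ℓ])^k) ∈ Ideal.span {f, g} := by
  classical
  exact euclid_asym (Nat.find hf) f g (Nat.find hf) (Nat.find_spec hf)
    (fun i hi => Nat.find_min hf hi) hcop le_rfl

/-- if `C (ℓ^k)` and `X^m` lie in an ideal `J`, the quotient is finite -/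
lemma finite_of_pows_mem (J : Ideal (PowerSeries ℤ_[ℓ])) (k m : ℕ)
    (hCk : C (R := ℤ_[ℓ]) ((ℓ:ℤ_[ℓ])^k) ∈ J) (hXm : (X : PowerSeries ℤ_[ℓ])^m ∈ J) :
    Finite (PowerSeries ℤ_[ℓ] ⧸ J) := by
  classical
  haveI : NeZero (ℓ^k) := ⟨pow_ne_zero _ (Fact.out : Nat.Prime ℓ).ne_zero⟩
  set π := Ideal.Quotient.mk J with hπ
  set lift : (Fin m → ZMod (ℓ^k)) → ℕ → ℤ_[ℓ] :=
    fun a j => if hj : j < m then (((a ⟨j, hj⟩).val : ℕ) : ℤ_[ℓ]) else 0 with hlift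
  set P : (Fin m → ZMod (ℓ^k)) → PowerSeries ℤ_[ℓ] :=
    fun a => ∑ j ∈ Finset.range m, C (R := ℤ_[ℓ]) (lift a j) * X^j with hP
  have hPcoeff : ∀ a i, coeff (R := ℤ_[ℓ]) i (P a) = if i < m then lift a i else 0 := by
    intro a i
    rw [hP]
    simp only [map_sum, coeff_C_mul_X_pow]
    rw [Finset.sum_ite_eq (Finset.range m) i (fun j => lift a j)]
    simp [Finset.mem_range]
  refine Finite.of_surjective (fun a => π (P a)) ?_
  intro x
  obtain ⟨h, rfl⟩ := Ideal.Quotient.mk_surjective x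
  set a : Fin m → ZMod (ℓ^k) := fun i => PadicInt.toZModPow k (coeff (R := ℤ_[ℓ]) (i:ℕ) h) with ha
  refine ⟨a, ?_⟩
  have hdvd : ∀ i : ℕ, i < m → (ℓ:ℤ_[ℓ])^k ∣ coeff (R := ℤ_[ℓ]) i (h - P a) := by
    intro i hi
    have h1 : coeff (R := ℤ_[ℓ]) i (h - P a) = coeff (R := ℤ_[ℓ]) i h - lift a i := by
      rw [map_sub, hPcoeff, if_pos hi]
    rw [← Ideal.mem_span_singleton, ← PadicInt.ker_toZModPow, RingHom.mem_ker, h1, map_sub]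
    rw [hlift]
    simp only [hi, dif_pos]
    rw [map_natCast]
    rw [ha]
    simp [ZMod.natCast_val, ZMod.cast_id]
  have hmem : h - P a ∈ J := by
    choose e he using hdvd
    set E : PowerSeries ℤ_[ℓ] := PowerSeries.mk
      (fun i => if hi : i < m then e i hi else 0) with hE
    have hX : (X : PowerSeries ℤ_[ℓ])^m ∣ (h - P a - C (R := ℤ_[ℓ]) ((ℓ:ℤ_[ℓ])^k) * E) := by
      rw [X_pow_dvd_iff]
      intro i hi
      rw [map_sub, coeff_C_mul, hE, coeff_mk]
      simp only [hi, dif_pos]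
      rw [← he i hi]
      ring
    obtain ⟨t, ht⟩ := hX
    have : h - P a = C (R := ℤ_[ℓ]) ((ℓ:ℤ_[ℓ])^k) * E + X^m * t := by
      rw [← ht]; ring
    rw [this]
    exact J.add_mem (J.mul_mem_right E hCk) (J.mul_mem_right t hXm)
  show π (P a) = Ideal.Quotient.mk J h
  rw [hπ]
  exact (Ideal.Quotient.eq.mpr hmem).symm

lemma main_aux (f g : PowerSeries ℤ_[ℓ]) (hf : ∃ i, IsUnit (coeff (R := ℤ_[ℓ]) i f)) (hg0 : g ≠ 0)
    (hcop : ∀ d, d ∣ f → d ∣ g → IsUnit d) :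
    Finite (PowerSeries ℤ_[ℓ] ⧸ Ideal.span ({f, g} : Set (PowerSeries ℤ_[ℓ]))) := by
  classical
  set J := Ideal.span ({f, g} : Set (PowerSeries ℤ_[ℓ])) with hJ
  have hfJ : f ∈ J := Ideal.subset_span (by simp)
  obtain ⟨b, g₁, hg₁, hu₁⟩ := strip_ell hg0
  have hcop₁ : ∀ d, d ∣ f → d ∣ g₁ → IsUnit d := fun d h1 h2 =>
    hcop d h1 (by rw [hg₁]; exact h2.mul_left _)
  obtain ⟨k₀, hk₀⟩ := euclid f g₁ hf hu₁ hcop₁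
  set k := k₀ + b with hk
  have hCk : C (R := ℤ_[ℓ]) ((ℓ:ℤ_[ℓ])^k) ∈ J := by
    rw [Ideal.mem_span_pair] at hk₀
    obtain ⟨u, v, huv⟩ := hk₀
    rw [hJ]
    refine Ideal.mem_span_pair.mpr ⟨u * C (R := ℤ_[ℓ]) ((ℓ:ℤ_[ℓ])^b), v, ?_⟩
    have hCC : C (R := ℤ_[ℓ]) ((ℓ:ℤ_[ℓ])^k)
        = C (R := ℤ_[ℓ]) ((ℓ:ℤ_[ℓ])^b) * C (R := ℤ_[ℓ]) ((ℓ:ℤ_[ℓ])^k₀) := by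
      rw [← _root_.map_mul, hk, pow_add, mul_comm]
    rw [hg₁, hCC]
    linear_combination (C (R := ℤ_[ℓ]) ((ℓ:ℤ_[ℓ])^b)) * huv
  -- X-power in J
  set n := Nat.find hf with hn
  set T : PowerSeries ℤ_[ℓ] := PowerSeries.mk fun i => if i < n then coeff (R := ℤ_[ℓ]) i f else 0 with hT
  set U : PowerSeries ℤ_[ℓ] := PowerSeries.mk fun i => coeff (R := ℤ_[ℓ]) (n+i) f with hU
  have hdecomp : f = T + X^n * U := by
    ext i
    rw [map_add, coeff_X_pow_mul', hT, hU]
    simp only [coeff_mk]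
    rcases Nat.lt_or_ge i n with h | h
    · simp [h, Nat.not_le_of_lt h]
    · have : n + (i - n) = i := by omega
      simp [h, Nat.not_lt_of_le h, this]
  have hUunit : IsUnit U := by
    rw [PowerSeries.isUnit_iff_constantCoeff]
    have h1 : constantCoeff (R := ℤ_[ℓ]) U = coeff (R := ℤ_[ℓ]) n f := by
      rw [← coeff_zero_eq_constantCoeff_apply, hU, coeff_mk, Nat.add_zero]
    rw [h1]; exact Nat.find_spec hf
  have hTdvd : (C (R := ℤ_[ℓ]) (ℓ:ℤ_[ℓ])) ∣ T := by
    rw [C_dvd_iff]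
    intro i
    rw [hT, coeff_mk]
    rcases Nat.lt_or_ge i n with h | h
    · simpa [h] using padic_not_isUnit_iff.mp (Nat.find_min hf h)
    · simp [Nat.not_lt_of_le h]
  obtain ⟨E, hE⟩ := hTdvd
  set π := Ideal.Quotient.mk J with hπ
  have hπf : π f = 0 := Ideal.Quotient.eq_zero_iff_mem.mpr hfJ
  have hπCk : π (C (R := ℤ_[ℓ]) (ℓ:ℤ_[ℓ]))^k = 0 := by
    rw [← _root_.map_pow, ← _root_.map_pow, Ideal.Quotient.eq_zero_iff_mem]
    exact hCk
  have hXm : (X : PowerSeries ℤ_[ℓ])^(n*k) ∈ J := by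
    rw [← Ideal.Quotient.eq_zero_iff_mem (I := J), ← hπ]
    have h1 : π (X^n) * π U = - (π (C (R := ℤ_[ℓ]) (ℓ:ℤ_[ℓ])) * π E) := by
      have h2 : (X:PowerSeries ℤ_[ℓ])^n * U = f - C (R := ℤ_[ℓ]) (ℓ:ℤ_[ℓ]) * E := by
        rw [hdecomp, hE]; ring
      rw [← _root_.map_mul, h2, map_sub, hπf, _root_.map_mul]; ring
    have h2 : (π (X^n))^k * (π U)^k = 0 := by
      have hnp : (-(π (C (R := ℤ_[ℓ]) (ℓ:ℤ_[ℓ])) * π E))^k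
          = (-1:PowerSeries ℤ_[ℓ] ⧸ J)^k * ((π (C (R := ℤ_[ℓ]) (ℓ:ℤ_[ℓ])))^k * (π E)^k) := by
        ring
      rw [← mul_pow, h1, hnp, hπCk]
      ring
    have h3 : IsUnit ((π U)^k) := (hUunit.map π).pow k
    have h4 : (π (X^n))^k = 0 := (IsUnit.mul_left_eq_zero h3).mp h2
    rw [pow_mul, _root_.map_pow]
    exact h4
  exact finite_of_pows_mem J k (n*k) hCk hXm

end IwasawaAux

/-- Let `ℓ` be a prime and `Λ = ℤℓ[[X]]`.  If `f, g ∈ Λ` are nonzero and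
have no common non-unit divisor, then the quotient ring `Λ/(f, g)` is finite. -/
theorem finite_quot_span_pair_of_coprime
    (ℓ : ℕ) [Fact (Nat.Prime ℓ)]
    (f g : PowerSeries ℤ_[ℓ]) (hf : f ≠ 0) (hg : g ≠ 0)
    (hcop : ∀ d : PowerSeries ℤ_[ℓ], d ∣ f → d ∣ g → IsUnit d) :
    Finite (PowerSeries ℤ_[ℓ] ⧸ Ideal.span ({f, g} : Set (PowerSeries ℤ_[ℓ]))) := by
  classical
  by_cases hfu : ∃ i, IsUnit (coeff (R := ℤ_[ℓ]) i f)
  · exact main_aux f g hfu hg hcop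
  · push_neg at hfu
    have hgu : ∃ i, IsUnit (coeff (R := ℤ_[ℓ]) i g) := by
      by_contra hgu
      push_neg at hgu
      have h1 : C (R := ℤ_[ℓ]) (ℓ:ℤ_[ℓ]) ∣ f := C_dvd_iff.mpr fun i => padic_not_isUnit_iff.mp (hfu i)
      have h2 : C (R := ℤ_[ℓ]) (ℓ:ℤ_[ℓ]) ∣ g := C_dvd_iff.mpr fun i => padic_not_isUnit_iff.mp (hgu i)
      have h3 := hcop _ h1 h2
      have h4 : IsUnit (ℓ:ℤ_[ℓ]) := by
        have h5 := h3.map (constantCoeff (R := ℤ_[ℓ]))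
        rwa [constantCoeff_C] at h5
      exact (padic_not_isUnit_iff.mpr dvd_rfl) h4
    rw [show ({f, g} : Set (PowerSeries ℤ_[ℓ])) = {g, f} from Set.pair_comm f g]
    exact main_aux g f hgu hf (fun d h1 h2 => hcop d h2 h1)
end
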